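/- Let d, n ≥ 1 and α ∈ (0,1). Let κ be a Markov kernel from X_NA × ℝ to ℝ^d (a generalized distributional imputation). On a common probability space, let (X̃^1, Y^1, X̂^1), …, (X̃^{n+1}, Y^{n+1}, X̂^{n+1}) be i.i.d. random elements of (X_NA × ℝ) × ℝ^d such that the conditional law of X̂^i given (X̃^i, Y^i) is κ(X̃^i, Y^i). Let s : ℝ^d × ℝ → ℝ be measurable, and define the split conformal quantile q̂ := Quantile_{1−α}( (Σ_{i=1}^n δ_{s(X̂^i, Y^i)} + δ_{+∞})/(n+1) ) and the prediction set Ĉ(x) := { y ∈ ℝ : s(x, y) ≤ q̂ } for x ∈ ℝ^d. Then P( Y^{n+1} ∈ Ĉ(X̂^{n+1}) ) ≥ 1 − α; in particular, split conformal prediction after distributional imputation of both the calibration points and the test point is marginally valid at level α. -/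

import Mathlib

open MeasureTheory ProbabilityTheory
open scoped ENNReal

universe u

/-- Measurable space structure on `Option α`, via the identification with `α ⊕ PUnit`. -/
instance optionMeasurableSpace {α : Type u} [MeasurableSpace α] : MeasurableSpace (Option α) :=
  MeasurableSpace.comap (Equiv.optionEquivSumPUnit.{0, u} α) inferInstance

/-- The `β`-quantile of the discrete distribution `∑ i, w i · δ_{v i}` on `ℝ ∪ {+∞}`:
`inf { z ∈ ℝ : ∑_{i : v i ≤ z} w i ≥ β }`, with `inf ∅ = +∞`. -/
noncomputable def wQuantile {ι : Type*} [Fintype ι] (β : ℝ) (w : ι → ℝ) (v : ι → EReal) : EReal :=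
  sInf {z : EReal | ∃ r : ℝ, z = (r : EReal) ∧
    β ≤ ∑ i ∈ Finset.univ.filter (fun i => v i ≤ (r : EReal)), w i}

/-- Total variation distance between two measures. -/
noncomputable def tvDist {Z : Type*} [MeasurableSpace Z] (P Q : Measure Z) : ℝ :=
  ⨆ A : {A : Set Z // MeasurableSet A}, |(P A.1).toReal - (Q A.1).toReal|

/-- The mask operator: coordinate `j` is `NA` (i.e. `none`) if `m j = true`, else `x j`. -/
def maskOp {d : ℕ} (x : Fin d → ℝ) (m : Fin d → Bool) : Fin d → Option ℝ :=
  fun j => if m j then none else some (x j)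

/-- The `β`-quantile of `(∑_{i=1}^n δ_{sc i} + δ_{+∞})/(n+1)`. -/
noncomputable def splitQuantile {n : ℕ} (β : ℝ) (sc : Fin n → ℝ) : EReal :=
  wQuantile β (fun _ : Option (Fin n) => 1 / (n + 1 : ℝ))
    (fun i => i.elim (⊤ : EReal) (fun j => ((sc j : ℝ) : EReal)))

/-!
The scores `s(X̂ⁱ, Yⁱ)` are i.i.d., hence exchangeable: the strict rank of the test score among
all `n + 1` scores has the same law as that of any other score. Pointwise, at least
`t := ⌈(1 - α)(n + 1)⌉` indices have strict rank `< t`, so summing over the indices gives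
`(n + 1) · P(rank of the test score < t) ≥ t ≥ (1 - α)(n + 1)`. Finally, the test score lies
below the split conformal quantile exactly when fewer than `t` calibration scores lie strictly
below it.
-/

open Finset

section StrictRank

variable {ι α : Type*} [Fintype ι] [LinearOrder α]

def strictRank (v : ι → α) (j : ι) : ℕ :=
  #{i | v i < v j}

lemma strictRank_comp_perm (v : ι → α) (σ : Equiv.Perm ι) (j : ι) :
    strictRank (v ∘ σ) j = strictRank v (σ j) :=
  card_equiv σ fun i => by simp

lemma le_card_strictRank_lt (v : ι → α) {t : ℕ} (ht : t ≤ Fintype.card ι) :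
    t ≤ #{j | strictRank v j < t} := by
  -- otherwise a minimiser of `v` outside that set would have strict rank `< t`
  classical
  set A : Finset ι := {j | strictRank v j < t}
  by_contra! hA
  obtain ⟨j, hjA, hj_min⟩ := exists_min_image Aᶜ v
    (card_pos.mp (by rw [card_compl]; omega))
  have hbelow : ({i | v i < v j} : Finset ι) ⊆ A := fun i hi => by
    by_contra hiA
    exact (mem_filter.mp hi).2.not_ge (hj_min i (mem_compl.mpr hiA))
  have : strictRank v j < t := (card_le_card hbelow).trans_lt hA
  exact mem_compl.mp hjA (mem_filter.mpr ⟨mem_univ j, this⟩)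

lemma strictRank_last {n : ℕ} (v : Fin (n + 1) → α) :
    strictRank v (Fin.last n) = #{i : Fin n | v i.castSucc < v (Fin.last n)} := by
  simp only [strictRank, card_filter, Fin.sum_univ_castSucc, lt_self_iff_false, if_false,
    add_zero]

end StrictRank

lemma splitQuantile_eq_sInf {n : ℕ} (β : ℝ) (sc : Fin n → ℝ) :
    splitQuantile β sc =
      sInf ((↑) '' {r : ℝ | ⌈β * (n + 1)⌉₊ ≤ #{i | sc i ≤ r}} : Set EReal) := by
  have hweight (r : ℝ) : β ≤ ∑ i ∈ univ.filter
      (fun i : Option (Fin n) => i.elim ⊤ (fun j => (sc j : EReal)) ≤ r), 1 / (n + 1 : ℝ) ↔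
      ⌈β * (n + 1)⌉₊ ≤ #{i | sc i ≤ r} := by
    rw [sum_filter, Fintype.sum_option]
    simp only [Option.elim, top_le_iff, EReal.coe_ne_top, if_false, zero_add, EReal.coe_le_coe_iff,
      ← sum_filter, sum_const, nsmul_eq_mul, mul_one_div, Nat.ceil_le]
    rw [le_div_iff₀ (by positivity)]
  simp only [splitQuantile, wQuantile, hweight]
  congr 1
  ext z
  simp [eq_comm, and_comm]

lemma coe_le_splitQuantile_iff {n : ℕ} (β : ℝ) (sc : Fin n → ℝ) (y : ℝ) :
    (y : EReal) ≤ splitQuantile β sc ↔ #{i | sc i < y} < ⌈β * (n + 1)⌉₊ := by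
  rw [splitQuantile_eq_sInf, le_sInf_iff, Set.forall_mem_image]
  simp only [Set.mem_ofPred_eq, EReal.coe_le_coe_iff]
  constructor
  · intro hy
    by_contra! ht
    -- the largest score below `y` (or `y - 1` if there is none) is an admissible threshold `< y`
    set R := insert (y - 1) ((univ.filter (sc · < y)).image sc)
    have hRy : R.max' (insert_nonempty _ _) < y := by
      simp [R, max'_lt_iff]
    have hbelow : #{i | sc i < y} ≤ #{i | sc i ≤ R.max' (insert_nonempty _ _)} :=
      card_le_card fun i hi => by
        simp only [mem_filter, mem_univ, true_and] at hi ⊢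
        exact le_max' R _ (mem_insert_of_mem (mem_image_of_mem sc (by simpa using hi)))
    exact (hy (ht.trans hbelow)).not_gt hRy
  · intro ht r hr
    by_contra! hry
    have hbelow : #{i | sc i ≤ r} ≤ #{i | sc i < y} :=
      card_le_card fun i hi => by
        simp only [mem_filter, mem_univ, true_and] at hi ⊢
        exact hi.trans_lt hry
    exact (hr.trans hbelow).not_gt ht

section Exchangeable

variable {Ω : Type*} [MeasurableSpace Ω] {μ : Measure Ω}

lemma measurable_strictRank {ι : Type*} [Fintype ι] (j : ι) :
    Measurable fun v : ι → ℝ => strictRank v j := by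
  simp only [strictRank, card_filter]
  exact Finset.measurable_sum _ fun i _ =>
    Measurable.ite (measurableSet_lt (measurable_pi_apply i) (measurable_pi_apply j))
      measurable_const measurable_const

lemma ProbabilityTheory.iIndepFun.identDistrib_comp_perm {ι E : Type*} [MeasurableSpace E]
    [Countable ι] {S : ι → Ω → E} (hind : iIndepFun S μ)
    (hident : ∀ i j, IdentDistrib (S i) (S j) μ μ) (σ : Equiv.Perm ι) :
    IdentDistrib (fun ω => (S · ω) ∘ σ) (fun ω => (S · ω)) μ μ :=
  IdentDistrib.pi (fun i => hident (σ i) i) (hind.precomp σ.injective) hind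

lemma natCast_le_card_mul_measure_strictRank_lt {ι : Type*} [Fintype ι]
    [IsProbabilityMeasure μ] {S : ι → Ω → ℝ} (hS : ∀ i, Measurable (S i))
    (hind : iIndepFun S μ) (hident : ∀ i j, IdentDistrib (S i) (S j) μ μ) {t : ℕ}
    (ht : t ≤ Fintype.card ι) (j : ι) :
    (t : ℝ≥0∞) ≤ Fintype.card ι * μ {ω | strictRank (S · ω) j < t} := by
  classical
  set A : ι → Set Ω := fun i => {ω | strictRank (S · ω) i < t}
  have hA_meas (i : ι) : MeasurableSet (A i) :=
    (measurable_strictRank i).comp (measurable_pi_lambda _ hS) measurableSet_Iio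
  -- swapping `i` and `j` preserves the joint law and exchanges the ranks of `i` and `j`
  have hA_eq (i : ι) : μ (A i) = μ (A j) := by
    have := (hind.identDistrib_comp_perm hident (Equiv.swap i j)).measure_mem_eq
      (measurable_strictRank j (measurableSet_Iio (a := t)))
    simpa [A, Set.preimage, strictRank_comp_perm] using this
  calc (t : ℝ≥0∞) = ∫⁻ _, (t : ℝ≥0∞) ∂μ := by simp
    _ ≤ ∫⁻ ω, ∑ i, (A i).indicator 1 ω ∂μ := lintegral_mono fun ω => by
        simp only [Set.indicator_apply, Pi.one_apply]
        rw [← natCast_card_filter]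
        exact_mod_cast le_card_strictRank_lt (S · ω) ht
    _ = ∑ i, μ (A i) := by
        rw [lintegral_finsetSum _ fun i _ => measurable_one.indicator (hA_meas i)]
        simp [lintegral_indicator_one (hA_meas _)]
    _ = Fintype.card ι * μ (A j) := by simp [hA_eq]

theorem one_sub_le_measure_coe_le_splitQuantile {n : ℕ} [IsProbabilityMeasure μ]
    {S : Fin (n + 1) → Ω → ℝ}
    (hS : ∀ i, Measurable (S i)) (hind : iIndepFun S μ)
    (hident : ∀ i j, IdentDistrib (S i) (S j) μ μ) {α : ℝ} (hα : 0 ≤ α) :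
    1 - α ≤ (μ {ω | (S (Fin.last n) ω : EReal) ≤
      splitQuantile (1 - α) (fun i => S i.castSucc ω)}).toReal := by
  set t := ⌈(1 - α) * (n + 1)⌉₊
  have ht : t ≤ n + 1 := Nat.ceil_le.mpr (by push_cast; nlinarith)
  have hevent :
      {ω | (S (Fin.last n) ω : EReal) ≤ splitQuantile (1 - α) (fun i => S i.castSucc ω)} =
        {ω | strictRank (S · ω) (Fin.last n) < t} := by
    ext ω
    simp [coe_le_splitQuantile_iff, strictRank_last, t]
  have hrank := natCast_le_card_mul_measure_strictRank_lt hS hind hident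
    (by simpa using ht) (Fin.last n)
  rw [hevent]
  have hrank_real :
      (t : ℝ) ≤ (n + 1) * (μ {ω | strictRank (S · ω) (Fin.last n) < t}).toReal := by
    have := ENNReal.toReal_mono (by finiteness) hrank
    rw [ENNReal.toReal_mul, Fintype.card_fin, ENNReal.toReal_natCast,
      ENNReal.toReal_natCast] at this
    exact_mod_cast this
  nlinarith [Nat.le_ceil ((1 - α) * (n + 1))]

end Exchangeable

theorem impute_then_split_conformal_marginally_valid_general
    (d n : ℕ) (α : ℝ) (hα : α ∈ Set.Ioo (0 : ℝ) 1)
    (κ : ProbabilityTheory.Kernel ((Fin d → Option ℝ) × ℝ) (Fin d → ℝ))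
    (ν : Measure ((Fin d → Option ℝ) × ℝ))
    {Ω : Type*} [MeasurableSpace Ω] (μ : Measure Ω) [IsProbabilityMeasure μ]
    (W : Fin (n + 1) → Ω → ((Fin d → Option ℝ) × ℝ) × (Fin d → ℝ))
    (hWmeas : ∀ i, Measurable (W i))
    (hWiid : iIndepFun W μ)
    (hWlaw : ∀ i, Measure.map (W i) μ = ν.compProd κ)
    (s : (Fin d → ℝ) × ℝ → ℝ) (hs : Measurable s) :
    1 - α ≤
      (μ {x | ((s ((W (Fin.last n) x).2, (W (Fin.last n) x).1.2) : ℝ) : EReal) ≤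
        splitQuantile (1 - α)
          (fun i : Fin n => s ((W i.castSucc x).2, (W i.castSucc x).1.2))}).toReal := by
  set score : ((Fin d → Option ℝ) × ℝ) × (Fin d → ℝ) → ℝ := fun z => s (z.2, z.1.2)
  have hscore : Measurable score := hs.comp (measurable_snd.prodMk measurable_fst.snd)
  have hident (i j : Fin (n + 1)) : IdentDistrib (W i) (W j) μ μ :=
    ⟨(hWmeas i).aemeasurable, (hWmeas j).aemeasurable, (hWlaw i).trans (hWlaw j).symm⟩
  exact one_sub_le_measure_coe_le_splitQuantile (S := fun i => score ∘ W i)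
    (fun i => hscore.comp (hWmeas i)) (hWiid.comp _ fun _ => hscore)
    (fun i j => (hident i j).comp hscore) hα.1.le

/-- Marginal validity of impute-then-split-CP with a distributional
imputation given by a Markov kernel `κ`: if the triples `(X̃^i, Y^i, X̂^i)` are i.i.d. with
joint law `ν ⊗ₘ κ` (so that the conditional law of `X̂^i` given `(X̃^i, Y^i)` is
`κ(X̃^i, Y^i)`), then the split conformal set built on the imputed calibration scores covers
`Y^{n+1}` at the imputed test point with probability `≥ 1 - α`. -/
theorem impute_then_split_conformal_marginally_valid
    (d n : ℕ) (hd : 1 ≤ d) (hn : 1 ≤ n) (α : ℝ) (hα : α ∈ Set.Ioo (0 : ℝ) 1)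
    (κ : ProbabilityTheory.Kernel ((Fin d → Option ℝ) × ℝ) (Fin d → ℝ))
    [ProbabilityTheory.IsMarkovKernel κ]
    (ν : Measure ((Fin d → Option ℝ) × ℝ)) [IsProbabilityMeasure ν]
    {Ω : Type*} [MeasurableSpace Ω] (μ : Measure Ω) [IsProbabilityMeasure μ]
    (W : Fin (n + 1) → Ω → ((Fin d → Option ℝ) × ℝ) × (Fin d → ℝ))
    (hWmeas : ∀ i, Measurable (W i))
    (hWiid : iIndepFun W μ)
    (hWlaw : ∀ i, Measure.map (W i) μ = ν.compProd κ)
    (s : (Fin d → ℝ) × ℝ → ℝ) (hs : Measurable s) :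
    1 - α ≤
      (μ {x | ((s ((W (Fin.last n) x).2, (W (Fin.last n) x).1.2) : ℝ) : EReal) ≤
        splitQuantile (1 - α)
          (fun i : Fin n => s ((W i.castSucc x).2, (W i.castSucc x).1.2))}).toReal :=
  impute_then_split_conformal_marginally_valid_general d n α hα κ ν μ W hWmeas hWiid hWlaw s hs
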